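/- arXiv:1705.06472 — 2 statements merged into one kernel-verified Lean document; each statement's English description precedes it below -/
import Mathlib

section
/- Let ∑ x_n be a conditionally convergent series in ℝ² such that every open half-circle of the unit circle contains at least one Levy vector of the series. Then A_abs(x_n) = ℝ², i.e., for every a ∈ ℝ² there is a subset E ⊆ ℕ with ∑_{n∈E} ‖x_n‖ < ∞ and ∑_{n∈E} x_n = a. -/
open Filter Topology

/-- Euclidean norm on the plane `ℝ × ℝ`. -/
noncomputable def enorm2 (v : ℝ × ℝ) : ℝ := Real.sqrt (v.1 ^ 2 + v.2 ^ 2)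

/-- Euclidean inner product on the plane. -/
def dot2 (u v : ℝ × ℝ) : ℝ := u.1 * v.1 + u.2 * v.2

/-- `u` is a Levy vector of the series `∑ x n`: `u` is a unit vector and for every `ε > 0`
the sum of norms of the terms lying in the cone `S_ε(u)` diverges. -/
noncomputable def IsLevy (x : ℕ → ℝ × ℝ) (u : ℝ × ℝ) : Prop :=
  enorm2 u = 1 ∧ ∀ ε : ℝ, 0 < ε → ¬ Summable (fun n =>
    if (1 - ε) * enorm2 u * enorm2 (x n) ≤ dot2 u (x n) then enorm2 (x n) else 0)

/-- The series `∑ x n` converges (in the given order) to `s`. -/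
def ConvergesTo (x : ℕ → ℝ × ℝ) (s : ℝ × ℝ) : Prop :=
  Tendsto (fun N => ∑ n ∈ Finset.range N, x n) atTop (𝓝 s)

/-- The series `∑ x n` is conditionally convergent. -/
noncomputable def CondConv (x : ℕ → ℝ × ℝ) : Prop :=
  (∃ s, ConvergesTo x s) ∧ ¬ Summable (fun n => enorm2 (x n))

/-- `s` belongs to the achievement set `A(x)`. -/
def Achieves (x : ℕ → ℝ × ℝ) (s : ℝ × ℝ) : Prop :=
  ∃ E : Set ℕ, ConvergesTo (Set.indicator E x) s

/-- `s` belongs to the absolute achievement set `A_abs(x)`. -/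
noncomputable def AchievesAbs (x : ℕ → ℝ × ℝ) (s : ℝ × ℝ) : Prop :=
  ∃ E : Set ℕ, Summable (fun n => enorm2 (Set.indicator E x n)) ∧
    HasSum (Set.indicator E x) s

/-- The reduction property of a series `∑ (x n, y n)`. -/
noncomputable def ReductionProperty (x y : ℕ → ℝ) : Prop :=
  Tendsto (fun n => |y n| / |x n|) atTop atTop ∧
  ∀ ε : ℝ, 0 < ε → ∀ t ∈ Set.Ioo (-ε) ε, ∀ N : ℕ,
    ∃ m : ℕ, ∃ k : ℕ → ℕ, 0 < m ∧ StrictMono k ∧ N ≤ k 0 ∧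
      |(∑ i ∈ Finset.range m, x (k i)) - t| < ε / 2 ∧
      ∀ j : ℕ, 1 ≤ j → j ≤ m →
        |∑ i ∈ Finset.range j, x (k i)| < ε ∧ |∑ i ∈ Finset.range j, y (k i)| < ε

/-!
Transport everything to the real inner product space `ℂ ≅ ℝ²`. Compactness of the unit circle
makes the half-circle hypothesis uniform: there is `δ > 0` such that every `w ≠ 0` satisfies
`δ‖w‖ ≤ ⟪w, u⟫` for some Levy vector `u`. Since the terms tend to `0` while those in a narrow cone
around `u` have divergent norm sum, one can pick, arbitrarily far out, finitely many of them of
total length `S ∈ [δ‖r‖/4, δ‖r‖/2]`; their sum is close to `S • u`, and subtracting it from the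
remainder `r` shrinks `‖r‖` by the factor `1 - δ²/8`. Iterating this greedily from `r = a` on
disjoint blocks selects a set of indices whose norm sum is dominated by a geometric series and
whose sum is `a`.
-/

open scoped RealInnerProductSpace

lemma tendsto_zero_of_tendsto_sum_range {G : Type*} [AddCommGroup G] [TopologicalSpace G]
    [IsTopologicalAddGroup G] [T2Space G] {f : ℕ → G} {s : G}
    (hf : Tendsto (fun N => ∑ n ∈ Finset.range N, f n) atTop (𝓝 s)) :
    Tendsto f atTop (𝓝 0) := by
  have h := (hf.comp (tendsto_add_atTop_nat 1)).sub hf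
  simpa only [Function.comp_def, Finset.sum_range_succ, add_sub_cancel_left, sub_self] using h

lemma exists_le_and_le_add_of_step_le {s : ℕ → ℝ} {L η : ℝ} (h0 : s 0 < L)
    (hstep : ∀ n, s (n + 1) ≤ s n + η) (hL : ∃ n, L ≤ s n) :
    ∃ n, L ≤ s n ∧ s n ≤ L + η := by
  classical
  refine ⟨Nat.find hL, Nat.find_spec hL, ?_⟩
  obtain ⟨m, hm⟩ : ∃ m, Nat.find hL = m + 1 :=
    Nat.exists_eq_succ_of_ne_zero fun h => (h ▸ Nat.find_spec hL).not_gt h0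
  have hbelow : s m < L := not_le.1 (Nat.find_min hL (by omega))
  rw [hm]
  linarith [hstep m]

lemma exists_finset_sum_mem_Icc {f : ℕ → ℝ} (hf : ∀ n, 0 ≤ f n) (hns : ¬ Summable f)
    (hf0 : Tendsto f atTop (𝓝 0)) {L η : ℝ} (hL : 0 < L) (hη : 0 < η) (N : ℕ) :
    ∃ s : Finset ℕ, (∀ n ∈ s, N ≤ n) ∧ L ≤ ∑ n ∈ s, f n ∧ ∑ n ∈ s, f n ≤ L + η := by
  obtain ⟨N₀, hN₀⟩ := eventually_atTop.1 (hf0.eventually (ge_mem_nhds hη))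
  set M := max N N₀
  have hunbounded : ∃ m, L ≤ ∑ i ∈ Finset.range m, f (M + i) := by
    by_contra! h
    refine hns ((summable_nat_add_iff M).1 ?_)
    simpa only [add_comm] using summable_of_sum_range_le (fun i => hf (M + i)) fun m => (h m).le
  obtain ⟨m, hm⟩ := exists_le_and_le_add_of_step_le (by simpa using hL)
    (fun m => by rw [Finset.sum_range_succ]; gcongr; exact hN₀ _ (by omega)) hunbounded
  refine ⟨Finset.Ico M (M + m), fun n hn => by rw [Finset.mem_Ico] at hn; omega, ?_⟩
  simpa only [Finset.sum_Ico_eq_sum_range, add_tsub_cancel_left] using hm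

section Blocks

variable {N : ℕ → ℕ} {B : ℕ → Finset ℕ}

lemma mem_iUnion_blocks_iff (hN : Monotone N) (hB : ∀ k, B k ⊆ Finset.Ico (N k) (N (k + 1)))
    {k n : ℕ} (hn : n ∈ Finset.Ico (N k) (N (k + 1))) :
    n ∈ ⋃ j, (B j : Set ℕ) ↔ n ∈ B k := by
  refine ⟨fun h => ?_, fun h => Set.mem_iUnion.2 ⟨k, h⟩⟩
  obtain ⟨j, hj⟩ := Set.mem_iUnion.1 h
  have hnj := Finset.mem_Ico.1 (hB j hj)
  have hnk := Finset.mem_Ico.1 hn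
  obtain rfl : j = k := by
    by_contra hjk
    rcases Nat.lt_or_gt_of_ne hjk with hlt | hlt <;> linarith [hN (Nat.succ_le_of_lt hlt)]
  exact hj

lemma sum_range_indicator_iUnion_blocks {M : Type*} [AddCommMonoid M] (hN : Monotone N)
    (hN0 : N 0 = 0) (hB : ∀ k, B k ⊆ Finset.Ico (N k) (N (k + 1))) (f : ℕ → M) (K : ℕ) :
    ∑ n ∈ Finset.range (N K), (⋃ k, (B k : Set ℕ)).indicator f n
      = ∑ k ∈ Finset.range K, ∑ n ∈ B k, f n := by
  induction K with
  | zero => simp [hN0]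
  | succ K ih =>
    rw [← Finset.sum_range_add_sum_Ico _ (hN K.le_succ), ih, Finset.sum_range_succ,
      ← Finset.sum_indicator_subset f (hB K)]
    congr 1
    refine Finset.sum_congr rfl fun n hn => ?_
    by_cases h : n ∈ B K
    · simp [h, Set.indicator_of_mem ((mem_iUnion_blocks_iff hN hB hn).2 h)]
    · simp [h, Set.indicator_of_notMem (mt (mem_iUnion_blocks_iff hN hB hn).1 h)]

lemma hasSum_indicator_iUnion_blocks {E : Type*} [NormedAddCommGroup E] [CompleteSpace E]
    {x : ℕ → E} {a : E} (hN : StrictMono N) (hN0 : N 0 = 0)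
    (hB : ∀ k, B k ⊆ Finset.Ico (N k) (N (k + 1)))
    (hnorm : Summable fun k => ∑ n ∈ B k, ‖x n‖) (hsum : HasSum (fun k => ∑ n ∈ B k, x n) a) :
    Summable (fun n => ‖(⋃ k, (B k : Set ℕ)).indicator x n‖) ∧
      HasSum ((⋃ k, (B k : Set ℕ)).indicator x) a := by
  set s := ⋃ k, (B k : Set ℕ)
  have hnorm' : Summable fun n => ‖s.indicator x n‖ := by
    refine summable_of_sum_range_le (c := ∑' k, ∑ n ∈ B k, ‖x n‖) (fun _ => norm_nonneg _)
      fun m => ?_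
    calc ∑ n ∈ Finset.range m, ‖s.indicator x n‖
        ≤ ∑ n ∈ Finset.range (N m), ‖s.indicator x n‖ :=
          Finset.sum_le_sum_of_subset_of_nonneg (Finset.range_mono hN.le_apply)
            fun _ _ _ => norm_nonneg _
      _ = ∑ k ∈ Finset.range m, ∑ n ∈ B k, ‖x n‖ := by
          simp only [norm_indicator_eq_indicator_norm]
          exact sum_range_indicator_iUnion_blocks hN.monotone hN0 hB _ m
      _ ≤ ∑' k, ∑ n ∈ B k, ‖x n‖ :=
          hnorm.sum_le_tsum _ fun _ _ => Finset.sum_nonneg fun _ _ => norm_nonneg _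
  refine ⟨hnorm', ?_⟩
  have htsum := (hnorm'.of_norm).hasSum
  convert htsum
  refine tendsto_nhds_unique ?_ (htsum.tendsto_sum_nat.comp hN.tendsto_atTop)
  exact hsum.tendsto_sum_nat.congr fun K =>
    (sum_range_indicator_iUnion_blocks hN.monotone hN0 hB x K).symm

end Blocks

lemma exists_blocks_of_forall_exists_finset {E : Type*} [NormedAddCommGroup E] {x : ℕ → E}
    {C θ : ℝ} (hC : 0 ≤ C) (hθ : 0 ≤ θ)
    (hstep : ∀ (N : ℕ) (r : E), ∃ F : Finset ℕ, (∀ n ∈ F, N ≤ n) ∧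
      ∑ n ∈ F, ‖x n‖ ≤ C * ‖r‖ ∧ ‖r - ∑ n ∈ F, x n‖ ≤ θ * ‖r‖) (a : E) :
    ∃ (N : ℕ → ℕ) (B : ℕ → Finset ℕ), StrictMono N ∧ N 0 = 0 ∧
      (∀ k, B k ⊆ Finset.Ico (N k) (N (k + 1))) ∧
      (∀ k, ∑ n ∈ B k, ‖x n‖ ≤ C * (θ ^ k * ‖a‖)) ∧
      ∀ K, ‖a - ∑ k ∈ Finset.range K, ∑ n ∈ B k, x n‖ ≤ θ ^ K * ‖a‖ := by
  choose F hFN hFnorm hFsub using hstep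
  let next : ℕ × E → ℕ × E := fun p =>
    (p.1 + (F p.1 p.2).sup id + 1, p.2 - ∑ n ∈ F p.1 p.2, x n)
  let N : ℕ → ℕ := fun k => (next^[k] (0, a)).1
  let r : ℕ → E := fun k => (next^[k] (0, a)).2
  have hN : ∀ k, N (k + 1) = N k + (F (N k) (r k)).sup id + 1 := fun k => by
    simp only [N, r, Function.iterate_succ_apply', next]
  have hr : ∀ k, r (k + 1) = r k - ∑ n ∈ F (N k) (r k), x n := fun k => by
    simp only [N, r, Function.iterate_succ_apply', next]
  have hpartial : ∀ K, a - ∑ k ∈ Finset.range K, ∑ n ∈ F (N k) (r k), x n = r K := by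
    intro K
    induction K with
    | zero => simp [r]
    | succ K ih => rw [Finset.sum_range_succ, ← sub_sub, ih, hr]
  have hgeom : ∀ k, ‖r k‖ ≤ θ ^ k * ‖a‖ := by
    intro k
    induction k with
    | zero => simp [r]
    | succ k ih =>
      rw [hr, pow_succ, mul_comm _ θ, mul_assoc]
      exact (hFsub _ _).trans (mul_le_mul_of_nonneg_left ih hθ)
  refine ⟨N, fun k => F (N k) (r k), strictMono_nat_of_lt_succ fun k => by rw [hN]; omega, rfl,
    fun k n hn => Finset.mem_Ico.2 ⟨hFN _ _ n hn, ?_⟩,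
    fun k => (hFnorm _ _).trans ?_, fun K => by rw [hpartial]; exact hgeom K⟩
  · rw [hN]
    have := Finset.le_sup (f := id) hn
    simp only [id] at this
    omega
  · exact mul_le_mul_of_nonneg_left (hgeom k) hC

lemma exists_hasSum_indicator_of_forall_exists_finset {E : Type*} [NormedAddCommGroup E]
    [CompleteSpace E] {x : ℕ → E} {C θ : ℝ} (hC : 0 ≤ C) (hθ0 : 0 ≤ θ) (hθ1 : θ < 1)
    (hstep : ∀ (N : ℕ) (r : E), ∃ F : Finset ℕ, (∀ n ∈ F, N ≤ n) ∧
      ∑ n ∈ F, ‖x n‖ ≤ C * ‖r‖ ∧ ‖r - ∑ n ∈ F, x n‖ ≤ θ * ‖r‖) (a : E) :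
    ∃ s : Set ℕ, Summable (fun n => ‖s.indicator x n‖) ∧ HasSum (s.indicator x) a := by
  obtain ⟨N, B, hN, hN0, hB, hnorm, hpartial⟩ :=
    exists_blocks_of_forall_exists_finset hC hθ0 hstep a
  have hgeom : Summable fun k => C * (θ ^ k * ‖a‖) :=
    ((summable_geometric_of_lt_one hθ0 hθ1).mul_right ‖a‖).mul_left C
  have hsummable : Summable fun k => ∑ n ∈ B k, ‖x n‖ :=
    hgeom.of_nonneg_of_le (fun k => Finset.sum_nonneg fun _ _ => norm_nonneg _) hnorm
  have hsum : HasSum (fun k => ∑ n ∈ B k, x n) a := by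
    refine (hasSum_iff_tendsto_nat_of_summable_norm
      (hsummable.of_nonneg_of_le (fun _ => norm_nonneg _) fun k => norm_sum_le _ _)).2 ?_
    rw [tendsto_iff_norm_sub_tendsto_zero]
    refine squeeze_zero (g := fun K => θ ^ K * ‖a‖) (fun _ => norm_nonneg _) (fun K => ?_) ?_
    · rw [norm_sub_rev]; exact hpartial K
    · simpa using (tendsto_pow_atTop_nhds_zero_of_lt_one hθ0 hθ1).mul_const ‖a‖
  exact ⟨_, hasSum_indicator_iUnion_blocks hN hN0 hB hsummable hsum⟩

section InnerProductSpace

variable {E : Type*} [NormedAddCommGroup E] [InnerProductSpace ℝ E]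

def IsLevyVector (x : ℕ → E) (u : E) : Prop :=
  ‖u‖ = 1 ∧ ∀ ε : ℝ, 0 < ε → ¬ Summable (fun n =>
    if (1 - ε) * ‖u‖ * ‖x n‖ ≤ ⟪u, x n⟫ then ‖x n‖ else 0)

lemma norm_sub_norm_smul_le_of_mem_cone {u q : E} (hu : ‖u‖ = 1) {c : ℝ} (hc : 0 ≤ c)
    (hq : (1 - c ^ 2 / 2) * ‖u‖ * ‖q‖ ≤ ⟪u, q⟫) : ‖q - ‖q‖ • u‖ ≤ c * ‖q‖ := by
  rw [hu, mul_one] at hq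
  have hsq : ‖q - ‖q‖ • u‖ ^ 2 = 2 * ‖q‖ ^ 2 - 2 * ‖q‖ * ⟪u, q⟫ := by
    rw [norm_sub_sq_real, real_inner_smul_right, norm_smul, norm_norm, hu, real_inner_comm]
    ring
  refine (pow_le_pow_iff_left₀ (norm_nonneg _) (by positivity) two_ne_zero).1 ?_
  rw [hsq]
  nlinarith [mul_le_mul_of_nonneg_left hq (norm_nonneg q)]

lemma norm_sum_sub_sum_norm_smul_le {x : ℕ → E} {u : E} {c : ℝ} {F : Finset ℕ}
    (hF : ∀ n ∈ F, ‖x n - ‖x n‖ • u‖ ≤ c * ‖x n‖) :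
    ‖∑ n ∈ F, x n - (∑ n ∈ F, ‖x n‖) • u‖ ≤ c * ∑ n ∈ F, ‖x n‖ := by
  rw [Finset.sum_smul, ← Finset.sum_sub_distrib, Finset.mul_sum]
  exact (norm_sum_le _ _).trans (Finset.sum_le_sum hF)

lemma norm_sub_le_of_near_smul {r u v : E} {δ S : ℝ} (hδ0 : 0 < δ) (hδ1 : δ ≤ 1)
    (hru : δ * ‖r‖ ≤ ⟪r, u⟫) (hvu : ‖v - S • u‖ ≤ δ / 4 * S) (hv : ‖v‖ ≤ S)
    (hSlo : δ * ‖r‖ / 4 ≤ S) (hShi : S ≤ δ * ‖r‖ / 2) :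
    ‖r - v‖ ≤ (1 - δ ^ 2 / 8) * ‖r‖ := by
  have hS : 0 ≤ S := (norm_nonneg v).trans hv
  have hrv : 3 / 4 * δ * S * ‖r‖ ≤ ⟪r, v⟫ := by
    have hsplit : ⟪r, v⟫ = S * ⟪r, u⟫ + ⟪r, v - S • u⟫ := by
      rw [inner_sub_right, real_inner_smul_right]; ring
    have hcs : |⟪r, v - S • u⟫| ≤ ‖r‖ * (δ / 4 * S) :=
      (abs_real_inner_le_norm _ _).trans (mul_le_mul_of_nonneg_left hvu (norm_nonneg r))
    nlinarith [mul_le_mul_of_nonneg_left hru hS, neg_abs_le ⟪r, v - S • u⟫]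
  refine (pow_le_pow_iff_left₀ (norm_nonneg _) (by nlinarith [norm_nonneg r]) two_ne_zero).1 ?_
  rw [norm_sub_sq_real]
  nlinarith [pow_le_pow_left₀ (norm_nonneg v) hv 2, mul_le_mul_of_nonneg_left hShi hS,
    mul_le_mul_of_nonneg_left hSlo (by positivity : 0 ≤ δ * ‖r‖), norm_nonneg r]

lemma exists_finset_norm_sub_sum_le {x : ℕ → E} (hx : Tendsto x atTop (𝓝 0)) {δ : ℝ}
    (hδ0 : 0 < δ) (hδ1 : δ ≤ 1)
    (hnet : ∀ w ≠ 0, ∃ u, IsLevyVector x u ∧ δ * ‖w‖ ≤ ⟪w, u⟫) (N : ℕ) (r : E) :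
    ∃ F : Finset ℕ, (∀ n ∈ F, N ≤ n) ∧ ∑ n ∈ F, ‖x n‖ ≤ ‖r‖ ∧
      ‖r - ∑ n ∈ F, x n‖ ≤ (1 - δ ^ 2 / 8) * ‖r‖ := by
  classical
  rcases eq_or_ne r 0 with rfl | hr
  · exact ⟨∅, by simp, by simp, by simp⟩
  obtain ⟨u, ⟨hu, hLevy⟩, hru⟩ := hnet r hr
  set c := δ / 4
  set cone := fun n => (1 - c ^ 2 / 2) * ‖u‖ * ‖x n‖ ≤ ⟪u, x n⟫
  set f := fun n => if cone n then ‖x n‖ else 0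
  have hf : ∀ n, 0 ≤ f n := fun n => by positivity
  have hf0 : Tendsto f atTop (𝓝 0) :=
    squeeze_zero hf (fun n => by by_cases h : cone n <;> simp [f, h]) (tendsto_norm_zero.comp hx)
  have hL : 0 < δ * ‖r‖ / 4 := by have := norm_pos_iff.2 hr; positivity
  obtain ⟨s, hsN, hslo, hshi⟩ :=
    exists_finset_sum_mem_Icc hf (hLevy _ (by positivity)) hf0 hL hL N
  set F := s.filter cone
  have hFs : ∑ n ∈ F, ‖x n‖ = ∑ n ∈ s, f n := Finset.sum_filter _ _
  have hnear : ∀ n ∈ F, ‖x n - ‖x n‖ • u‖ ≤ c * ‖x n‖ := fun n hn =>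
    norm_sub_norm_smul_le_of_mem_cone hu (by positivity) (Finset.mem_filter.1 hn).2
  refine ⟨F, fun n hn => hsN n (Finset.mem_filter.1 hn).1, ?_, ?_⟩
  · have := norm_nonneg r
    nlinarith
  · exact norm_sub_le_of_near_smul hδ0 hδ1 hru (norm_sum_sub_sum_norm_smul_le hnear)
      (norm_sum_le _ _) (by linarith) (by linarith)

lemma exists_uniform_inner_ge_of_forall_inner_pos [ProperSpace E] {P : E → Prop}
    (hP : ∀ w ≠ 0, ∃ u, P u ∧ 0 < ⟪w, u⟫) :
    ∃ δ : ℝ, 0 < δ ∧ δ ≤ 1 ∧ ∀ w ≠ 0, ∃ u, P u ∧ δ * ‖w‖ ≤ ⟪w, u⟫ := by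
  let U : ℕ → Set E := fun m => ⋃ (u : E) (_ : P u), {w | 1 / ((m : ℝ) + 1) < ⟪w, u⟫}
  have hUopen : ∀ m, IsOpen (U m) := fun m =>
    isOpen_biUnion fun u _ => isOpen_lt continuous_const (continuous_id.inner continuous_const)
  have hUmono : Monotone U := fun m k hmk => Set.biUnion_mono subset_rfl fun u _ w hw =>
    (lt_of_le_of_lt (Nat.one_div_le_one_div hmk) hw : 1 / ((k : ℝ) + 1) < ⟪w, u⟫)
  have hcover : Metric.sphere (0 : E) 1 ⊆ ⋃ m, U m := by
    intro w hw
    obtain ⟨u, hu, hwu⟩ := hP w (ne_zero_of_mem_unit_sphere ⟨w, hw⟩)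
    obtain ⟨m, hm⟩ := exists_nat_one_div_lt hwu
    exact Set.mem_iUnion.2 ⟨m, Set.mem_biUnion hu hm⟩
  obtain ⟨m, hm⟩ := (isCompact_sphere (0 : E) 1).elim_directed_cover U hUopen hcover
    hUmono.directed_le
  refine ⟨1 / ((m : ℝ) + 1), by positivity,
    by simpa using Nat.one_div_le_one_div (α := ℝ) m.zero_le, fun w hw => ?_⟩
  have hw' : ‖w‖⁻¹ • w ∈ Metric.sphere (0 : E) 1 := by
    simp [norm_smul, norm_ne_zero_iff.2 hw]
  obtain ⟨u, hu, hwu⟩ := Set.mem_iUnion₂.1 (hm hw')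
  refine ⟨u, hu, ?_⟩
  have hwu' : 1 / ((m : ℝ) + 1) < ‖w‖⁻¹ * ⟪w, u⟫ := by simpa [real_inner_smul_left] using hwu
  have hpos := norm_pos_iff.2 hw
  rw [inv_mul_eq_div, lt_div_iff₀ hpos] at hwu'
  exact hwu'.le

theorem exists_hasSum_indicator_of_isLevyVector [ProperSpace E] {x : ℕ → E}
    (hx : Tendsto x atTop (𝓝 0)) (hlevy : ∀ w ≠ 0, ∃ u, IsLevyVector x u ∧ 0 < ⟪w, u⟫) (a : E) :
    ∃ s : Set ℕ, Summable (fun n => ‖s.indicator x n‖) ∧ HasSum (s.indicator x) a := by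
  obtain ⟨δ, hδ0, hδ1, hnet⟩ := exists_uniform_inner_ge_of_forall_inner_pos hlevy
  exact exists_hasSum_indicator_of_forall_exists_finset (C := 1) (θ := 1 - δ ^ 2 / 8) zero_le_one
    (by nlinarith) (by nlinarith)
    (by simpa only [one_mul] using exists_finset_norm_sub_sum_le hx hδ0 hδ1 hnet) a

end InnerProductSpace

lemma enorm2_eq_norm (v : ℝ × ℝ) : enorm2 v = ‖Complex.equivRealProdCLM.symm v‖ := by
  simp [enorm2, Complex.norm_def, Complex.normSq_apply, sq]

lemma dot2_eq_inner (u v : ℝ × ℝ) :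
    dot2 u v = ⟪Complex.equivRealProdCLM.symm u, Complex.equivRealProdCLM.symm v⟫ := by
  simp only [dot2, Complex.inner, Complex.mul_re, Complex.equivRealProdCLM_symm_apply_re,
    Complex.conj_re, Complex.equivRealProdCLM_symm_apply_im, Complex.conj_im, mul_neg,
    sub_neg_eq_add]
  ring

lemma isLevy_iff_isLevyVector (x : ℕ → ℝ × ℝ) (u : ℝ × ℝ) :
    IsLevy x u ↔
      IsLevyVector (Complex.equivRealProdCLM.symm ∘ x) (Complex.equivRealProdCLM.symm u) := by
  simp only [IsLevy, IsLevyVector, enorm2_eq_norm, dot2_eq_inner, Function.comp_apply]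

theorem stmt_7 (x : ℕ → ℝ × ℝ) (hcc : CondConv x)
    (hhalf : ∀ w : ℝ × ℝ, w ≠ 0 → ∃ u : ℝ × ℝ, IsLevy x u ∧ 0 < dot2 w u) :
    ∀ a : ℝ × ℝ, AchievesAbs x a := by
  intro a
  let e := Complex.equivRealProdCLM
  obtain ⟨⟨_, hconv⟩, -⟩ := hcc
  have hx : Tendsto (e.symm ∘ x) atTop (𝓝 0) := by
    simpa using (e.symm.continuous.tendsto 0).comp (tendsto_zero_of_tendsto_sum_range hconv)
  have hlevy : ∀ w ≠ 0, ∃ u, IsLevyVector (e.symm ∘ x) u ∧ 0 < ⟪w, u⟫ := by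
    intro w hw
    obtain ⟨u, hu, hwu⟩ := hhalf (e w) (e.map_ne_zero_iff.2 hw)
    rw [dot2_eq_inner, e.symm_apply_apply] at hwu
    exact ⟨e.symm u, (isLevy_iff_isLevyVector x u).1 hu, hwu⟩
  obtain ⟨s, hnorm, hsum⟩ := exists_hasSum_indicator_of_isLevyVector hx hlevy (e.symm a)
  rw [Set.indicator_comp_of_zero (map_zero _)] at hnorm hsum
  refine ⟨s, by simpa only [enorm2_eq_norm, Function.comp_apply] using hnorm, ?_⟩
  rw [← e.apply_symm_apply a]
  exact (e.symm.hasSum (f := s.indicator x)).1 hsum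
end

section
/- Let ∑ y_n be a conditionally convergent series of real numbers and ∑ x_n an absolutely convergent series with x_n > 0 for all n. Define v_n = (x_n, y_n) ∈ ℝ². Then the set of Levy vectors of ∑ v_n equals {(0,1), (0,-1)} and A_abs(v_n) ≠ A(v_n); in fact the point (∑ x_n, ∑ y_n) lies in A(v_n) but not in A_abs(v_n). -/
open Filter Topology

/-!
Since `∑ x n` converges absolutely, a cone around a unit vector `u` with `|u.2| < 1` collects
only summable norm: inside it `‖v n‖` is controlled by `|x n|`. Around `(0, ±1)` the cone
collects, up to a summable error, the positive (resp. negative) part of `y`, and both diverge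
because `∑ y n` converges only conditionally. Finally `(∑ x n, ∑ y n)` is reached by taking every
term, and every absolutely summable subseries must omit some index, which makes its first
coordinate strictly smaller.
-/

lemma abs_snd_le_enorm2 (v : ℝ × ℝ) : |v.2| ≤ enorm2 v := by
  rw [enorm2, ← Real.sqrt_sq_eq_abs]
  exact Real.sqrt_le_sqrt (by nlinarith [sq_nonneg v.1])

lemma enorm2_le_abs_add_abs (v : ℝ × ℝ) : enorm2 v ≤ |v.1| + |v.2| := by
  rw [enorm2, ← Real.sqrt_sq (by positivity : 0 ≤ |v.1| + |v.2|)]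
  exact Real.sqrt_le_sqrt (by nlinarith [abs_nonneg v.1, abs_nonneg v.2, sq_abs v.1, sq_abs v.2])

lemma enorm2_neg_snd (a b : ℝ) : enorm2 (a, -b) = enorm2 (a, b) := by
  simp [enorm2]

lemma dot2_le (u v : ℝ × ℝ) : dot2 u v ≤ |u.1| * |v.1| + |u.2| * enorm2 v := by
  have h1 : u.1 * v.1 ≤ |u.1| * |v.1| := by rw [← abs_mul]; exact le_abs_self _
  have h2 : u.2 * v.2 ≤ |u.2| * enorm2 v := calc
    u.2 * v.2 ≤ |u.2| * |v.2| := by rw [← abs_mul]; exact le_abs_self _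
    _ ≤ |u.2| * enorm2 v := mul_le_mul_of_nonneg_left (abs_snd_le_enorm2 v) (abs_nonneg _)
  exact add_le_add h1 h2

lemma eq_or_eq_of_enorm2_eq_one_of_one_le_abs_snd {u : ℝ × ℝ} (hu : enorm2 u = 1)
    (h : 1 ≤ |u.2|) : u = (0, 1) ∨ u = (0, -1) := by
  have hsq : u.1 ^ 2 + u.2 ^ 2 = 1 := (Real.sqrt_eq_one).mp hu
  have h1 : u.1 = 0 := by nlinarith [sq_abs u.2, sq_nonneg u.1]
  have h2 : |u.2| = 1 := le_antisymm (by nlinarith [sq_abs u.2, abs_nonneg u.2]) h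
  rcases abs_eq (zero_le_one' ℝ) |>.mp h2 with h2 | h2
  · exact Or.inl (Prod.ext h1 h2)
  · exact Or.inr (Prod.ext h1 h2)

section Levy

variable {x y : ℕ → ℝ}

lemma not_isLevy_of_abs_snd_lt_one (hx : Summable x) {u : ℝ × ℝ} (hu : |u.2| < 1) :
    ¬ IsLevy (fun n => (x n, y n)) u := by
  rintro ⟨hunit, hdiv⟩
  set ε := (1 - |u.2|) / 2 with hε
  have hε0 : 0 < ε := by linarith
  refine hdiv ε hε0 (hx.abs.mul_left (|u.1| / ε) |>.of_nonneg_of_le (fun n => ?_) fun n => ?_)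
  · split_ifs <;> simp [enorm2]
  · split_ifs with hcone
    · -- in the cone, `(1 - ε) ‖v‖ ≤ ⟨u, v⟩ ≤ |u.1| |x| + |u.2| ‖v‖` and `1 - ε - |u.2| = ε`
      rw [hunit, mul_one] at hcone
      have hdot := dot2_le u (x n, y n)
      have hgap : ε * enorm2 (x n, y n) =
          (1 - ε) * enorm2 (x n, y n) - |u.2| * enorm2 (x n, y n) := by
        rw [hε]; ring
      rw [div_mul_eq_mul_div, le_div_iff₀ hε0]
      dsimp only at hcone hdot
      linarith
    · positivity

lemma IsLevy.eq_or_eq (hx : Summable x) {u : ℝ × ℝ} (h : IsLevy (fun n => (x n, y n)) u) :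
    u = (0, 1) ∨ u = (0, -1) :=
  eq_or_eq_of_enorm2_eq_one_of_one_le_abs_snd h.1 <|
    not_lt.mp fun hu => not_isLevy_of_abs_snd_lt_one hx hu h

lemma not_summable_cone_of_not_summable_posPart (hx : Summable x)
    (hy : ¬ Summable fun n => (y n)⁺) {ε : ℝ} (hε : 0 < ε) :
    ¬ Summable fun n =>
      if (1 - ε) * enorm2 (x n, y n) ≤ y n then enorm2 (x n, y n) else 0 := by
  intro hcone
  refine hy ((hcone.add (hx.abs.div_const ε)).of_nonneg_of_le (fun n => posPart_nonneg _)
    fun n => ?_)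
  have hN : |y n| ≤ enorm2 (x n, y n) := abs_snd_le_enorm2 (x n, y n)
  have hxε : 0 ≤ |x n| / ε := by positivity
  split_ifs with h
  · have hpos : (y n)⁺ ≤ |y n| := sup_le (le_abs_self _) (abs_nonneg _)
    linarith
  · rcases le_or_gt (y n) 0 with hy0 | hy0
    · rw [posPart_eq_zero.mpr hy0]; linarith
    · -- outside the cone `ε y < (1 - ε) |x| ≤ |x|`, using `‖v‖ ≤ |x| + y`
      have hN_le := enorm2_le_abs_add_abs (x n, y n)
      rw [posPart_eq_self.mpr hy0.le, zero_add, le_div_iff₀ hε]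
      simp only [abs_of_pos hy0] at hN hN_le
      nlinarith [abs_nonneg (x n)]

lemma isLevy_zero_one (hx : Summable x) (hy : ¬ Summable fun n => (y n)⁺) :
    IsLevy (fun n => (x n, y n)) (0, 1) := by
  have hunit : enorm2 (0, 1) = 1 := by simp [enorm2]
  refine ⟨hunit, fun ε hε => ?_⟩
  simpa only [hunit, mul_one, dot2, zero_mul, one_mul, zero_add]
    using not_summable_cone_of_not_summable_posPart hx hy hε

lemma isLevy_zero_neg_one (hx : Summable x) (hy : ¬ Summable fun n => (y n)⁻) :
    IsLevy (fun n => (x n, y n)) (0, -1) := by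
  have hunit : enorm2 (0, -1) = 1 := by simp [enorm2]
  refine ⟨hunit, fun ε hε => ?_⟩
  simpa only [hunit, mul_one, dot2, zero_mul, neg_one_mul, zero_add, enorm2_neg_snd]
    using not_summable_cone_of_not_summable_posPart (y := fun n => -y n) hx
      (by simpa only [posPart_neg] using hy) hε

end Levy

section ConditionalConvergence

variable {y : ℕ → ℝ} {s : ℝ}

lemma not_summable_posPart_of_tendsto
    (hy : Tendsto (fun N => ∑ n ∈ Finset.range N, y n) atTop (𝓝 s))
    (hyabs : ¬ Summable fun n => |y n|) : ¬ Summable fun n => (y n)⁺ := by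
  intro hpos
  have hneg : Summable fun n => (y n)⁻ := by
    refine (hasSum_iff_tendsto_nat_of_nonneg (fun n => negPart_nonneg _)
      ((∑' n, (y n)⁺) - s) |>.mpr ?_).summable
    refine (hpos.hasSum.tendsto_sum_nat.sub hy).congr fun N => ?_
    rw [← Finset.sum_sub_distrib]
    exact Finset.sum_congr rfl fun n _ => by linarith [posPart_sub_negPart (y n)]
  exact hyabs ((hpos.add hneg).congr fun n => posPart_add_negPart (y n))

lemma not_summable_negPart_of_tendsto
    (hy : Tendsto (fun N => ∑ n ∈ Finset.range N, y n) atTop (𝓝 s))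
    (hyabs : ¬ Summable fun n => |y n|) : ¬ Summable fun n => (y n)⁻ := by
  simpa only [posPart_neg] using not_summable_posPart_of_tendsto (y := fun n => -y n)
    (by simpa only [Finset.sum_neg_distrib] using hy.neg) (by simpa only [abs_neg] using hyabs)

end ConditionalConvergence

section Achievement

variable {x y : ℕ → ℝ}

lemma achieves_of_convergesTo {v : ℕ → ℝ × ℝ} {s : ℝ × ℝ} (h : ConvergesTo v s) :
    Achieves v s :=
  ⟨Set.univ, by rwa [Set.indicator_univ]⟩

lemma convergesTo_prodMk {a b : ℝ}
    (hx : Tendsto (fun N => ∑ n ∈ Finset.range N, x n) atTop (𝓝 a))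
    (hy : Tendsto (fun N => ∑ n ∈ Finset.range N, y n) atTop (𝓝 b)) :
    ConvergesTo (fun n => (x n, y n)) (a, b) :=
  (hx.prodMk_nhds hy).congr fun N =>
    (Prod.ext (by simp [Prod.fst_sum]) (by simp [Prod.snd_sum])).symm

lemma eq_univ_of_hasSum_indicator (hxpos : ∀ n, 0 < x n) (hx : Summable x) {E : Set ℕ}
    (hE : HasSum (E.indicator x) (∑' n, x n)) : E = Set.univ := by
  refine Set.eq_univ_of_forall fun n0 => by_contra fun hn0 => ?_
  have hle : ∀ n, E.indicator x n ≤ x n := fun n =>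
    Set.indicator_le_self' (fun n _ => (hxpos n).le) n
  have hlt : ∑' n, E.indicator x n < ∑' n, x n :=
    hx.tsum_lt_tsum_of_nonneg (i := n0) (Set.indicator_nonneg fun n _ => (hxpos n).le) hle
      (by simpa [hn0] using hxpos n0)
  exact hlt.ne hE.tsum_eq

lemma not_achievesAbs_tsum (hxpos : ∀ n, 0 < x n) (hx : Summable x)
    (hyabs : ¬ Summable fun n => |y n|) (b : ℝ) :
    ¬ AchievesAbs (fun n => (x n, y n)) ((∑' n, x n), b) := by
  rintro ⟨E, hnorm, hE⟩
  have hfst : HasSum (E.indicator x) (∑' n, x n) := by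
    convert hE.map (AddMonoidHom.fst ℝ ℝ) continuous_fst using 1
    · ext n
      by_cases hn : n ∈ E <;> simp [hn]
    · rfl
  rw [eq_univ_of_hasSum_indicator hxpos hx hfst, Set.indicator_univ] at hnorm
  exact hyabs <|
    hnorm.of_nonneg_of_le (fun n => abs_nonneg _) fun n => abs_snd_le_enorm2 (x n, y n)

end Achievement

theorem stmt_14 (x y : ℕ → ℝ) (hxpos : ∀ n, 0 < x n) (hxabs : Summable x)
    (sy : ℝ) (hy : Tendsto (fun N => ∑ n ∈ Finset.range N, y n) atTop (𝓝 sy))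
    (hyabs : ¬ Summable (fun n => |y n|)) :
    {u : ℝ × ℝ | IsLevy (fun n => (x n, y n)) u} = {((0 : ℝ), (1 : ℝ)), ((0 : ℝ), (-1 : ℝ))} ∧
    Achieves (fun n => (x n, y n)) ((∑' n, x n), sy) ∧
    ¬ AchievesAbs (fun n => (x n, y n)) ((∑' n, x n), sy) ∧
    {s : ℝ × ℝ | AchievesAbs (fun n => (x n, y n)) s} ≠
      {s : ℝ × ℝ | Achieves (fun n => (x n, y n)) s} := by
  have hach : Achieves (fun n => (x n, y n)) ((∑' n, x n), sy) :=
    achieves_of_convergesTo (convergesTo_prodMk hxabs.hasSum.tendsto_sum_nat hy)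
  have hnabs := not_achievesAbs_tsum hxpos hxabs hyabs sy
  refine ⟨?_, hach, hnabs, fun heq => hnabs ((Set.ext_iff.mp heq _).mpr hach)⟩
  ext u
  refine ⟨IsLevy.eq_or_eq hxabs, ?_⟩
  rintro (rfl | rfl)
  · exact isLevy_zero_one hxabs (not_summable_posPart_of_tendsto hy hyabs)
  · exact isLevy_zero_neg_one hxabs (not_summable_negPart_of_tendsto hy hyabs)
end
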